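/- arXiv:1808.10474 — 7 statements merged into one kernel-verified Lean document; each statement's English description precedes it below -/
import Mathlib

section
/- Let f satisfy the Polyak–Łojasiewicz inequality with constant μ_f > 0 and have unique minimizer x* with f* = f(x*). Let x : ℝ → ℝⁿ be any trajectory of the rescaled gradient flow ẋ = −∇f(x)/‖∇f(x)‖^{1/2} (right-hand side taken to be 0 when ∇f(x) = 0). Then f(x(t)) = f* for every t ≥ 8·(½(f(x(0)) − f*)²)^{1/8}/(2μ_f)^{3/4}; in particular the trajectory reaches the minimum value in finite time. -/
open scoped RealInnerProductSpace Classical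

/-!
Along the flow, `h(t) = f(x(t)) - f*` satisfies `h' = ⟪∇f, ẋ⟫ = -‖∇f‖^{3/2}`, and the PL inequality
turns this into `h' ≤ -(2μ_f)^{3/4} h^{3/4}`. Hence `h^{1/4} + (2μ_f)^{3/4} t / 4` is nonincreasing
while `h > 0`, so `h` vanishes by time `4 h(0)^{1/4} / (2μ_f)^{3/4}`; this is below the stated bound
because `(½ h(0)²)^{1/8} = 2^{-1/8} h(0)^{1/4}` and `8 · 2^{-1/8} ≥ 4`.
-/

open Set

lemma antitoneOn_Icc_of_hasDerivAt_nonpos {f f' : ℝ → ℝ} {a b : ℝ}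
    (hf : ∀ s ∈ Icc a b, HasDerivAt f (f' s) s) (hf' : ∀ s ∈ Ioo a b, f' s ≤ 0) :
    AntitoneOn f (Icc a b) :=
  antitoneOn_of_hasDerivWithinAt_nonpos (convex_Icc a b)
    (fun s hs ↦ (hf s hs).continuousAt.continuousWithinAt)
    (fun s hs ↦ by
      rw [interior_Icc] at hs ⊢
      exact (hf s (Ioo_subset_Icc_self hs)).hasDerivWithinAt)
    (fun s hs ↦ hf' s (by rwa [interior_Icc] at hs))

section FiniteTimeExtinction

variable {h h' : ℝ → ℝ} {c α : ℝ}

lemma antitoneOn_rpow_one_sub_add_mul {a b : ℝ} (hα : α < 1)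
    (hderiv : ∀ s ∈ Icc a b, HasDerivAt h (h' s) s) (hpos : ∀ s ∈ Icc a b, 0 < h s)
    (hineq : ∀ s ∈ Icc a b, h' s ≤ -c * h s ^ α) :
    AntitoneOn (fun s ↦ h s ^ (1 - α) + c * (1 - α) * s) (Icc a b) := by
  have hderiv' : ∀ s ∈ Icc a b, HasDerivAt (fun s ↦ h s ^ (1 - α) + c * (1 - α) * s)
      ((1 - α) * (h' s * h s ^ (-α) + c)) s := by
    intro s hs
    refine (((hderiv s hs).rpow_const (p := 1 - α) (Or.inl (hpos s hs).ne')).add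
      ((hasDerivAt_id s).const_mul (c * (1 - α)))).congr_deriv ?_
    rw [sub_sub_cancel_left]
    ring
  refine antitoneOn_Icc_of_hasDerivAt_nonpos hderiv' fun s hs ↦ ?_
  have hs := Ioo_subset_Icc_self hs
  have hrate : h' s * h s ^ (-α) ≤ -c := by
    rw [Real.rpow_neg (hpos s hs).le, ← div_eq_mul_inv, div_le_iff₀ (by positivity [hpos s hs])]
    exact hineq s hs
  nlinarith

/-- The time bound is the extinction time of the solution of `y' = -c y^α`. -/
theorem eq_zero_of_hasDerivAt_le_neg_mul_rpow (hc : 0 < c) (hα : α < 1)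
    (hderiv : ∀ t, 0 ≤ t → HasDerivAt h (h' t) t) (hnn : ∀ t, 0 ≤ t → 0 ≤ h t)
    (hineq : ∀ t, 0 ≤ t → h' t ≤ -c * h t ^ α) {t : ℝ}
    (ht : h 0 ^ (1 - α) / (c * (1 - α)) ≤ t) : h t = 0 := by
  have hc' : 0 < c * (1 - α) := mul_pos hc (sub_pos.mpr hα)
  have ht₀ : 0 ≤ t := le_trans (by have := hnn 0 le_rfl; positivity) ht
  by_contra hne
  have hpos_t : 0 < h t := (hnn t ht₀).lt_of_ne' hne
  have hanti : AntitoneOn h (Icc 0 t) :=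
    antitoneOn_Icc_of_hasDerivAt_nonpos (fun s hs ↦ hderiv s hs.1) fun s hs ↦
      (hineq s hs.1.le).trans (by have := Real.rpow_nonneg (hnn s hs.1.le) α; nlinarith)
  have hpos : ∀ s ∈ Icc 0 t, 0 < h s := fun s hs ↦
    hpos_t.trans_le (hanti hs (right_mem_Icc.mpr ht₀) hs.2)
  have hdecay := antitoneOn_rpow_one_sub_add_mul hα (fun s hs ↦ hderiv s hs.1) hpos
    (fun s hs ↦ hineq s hs.1) (left_mem_Icc.mpr ht₀) (right_mem_Icc.mpr ht₀) ht₀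
  have hT : h 0 ^ (1 - α) ≤ c * (1 - α) * t := (div_le_iff₀' hc').mp ht
  have := Real.rpow_pos_of_pos hpos_t (1 - α)
  simp only [mul_zero, add_zero] at hdecay
  linarith

end FiniteTimeExtinction

lemma rpow_le_rpow_two_mul_of_le_sq {a b q : ℝ} (ha : 0 ≤ a) (hb : 0 ≤ b) (hq : 0 ≤ q)
    (hab : a ≤ b ^ 2) : a ^ q ≤ b ^ (2 * q) := by
  rw [Real.rpow_mul hb, Real.rpow_two]
  exact Real.rpow_le_rpow ha hab hq

lemma four_mul_rpow_quarter_le {a : ℝ} (ha : 0 ≤ a) :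
    4 * a ^ ((1 : ℝ) / 4) ≤ 8 * ((1 / 2) * a ^ 2) ^ ((1 : ℝ) / 8) := by
  have hsplit : ((1 / 2 : ℝ) * a ^ 2) ^ ((1 : ℝ) / 8) =
      (1 / 2 : ℝ) ^ ((1 : ℝ) / 8) * a ^ ((1 : ℝ) / 4) := by
    rw [Real.mul_rpow (by norm_num) (by positivity), ← Real.rpow_natCast a 2, ← Real.rpow_mul ha]
    norm_num
  have hhalf : (1 / 2 : ℝ) ≤ (1 / 2 : ℝ) ^ ((1 : ℝ) / 8) := by
    simpa using Real.rpow_le_rpow_of_exponent_ge (x := (1 / 2 : ℝ)) (by norm_num) (by norm_num)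
      (by norm_num : (1 : ℝ) / 8 ≤ 1)
  have := Real.rpow_nonneg ha ((1 : ℝ) / 4)
  rw [hsplit]
  nlinarith

section RescaledGradient

variable {E : Type*} [NormedAddCommGroup E] [InnerProductSpace ℝ E]

noncomputable def rescaledGradient [DecidableEq E] (p : ℝ) (g : E) : E :=
  if g = 0 then 0 else -(‖g‖ ^ p)⁻¹ • g

lemma inner_rescaledGradient [DecidableEq E] {p : ℝ} (hp : p ≠ 2) (g : E) :
    ⟪g, rescaledGradient p g⟫ = -‖g‖ ^ (2 - p) := by
  by_cases hg : g = 0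
  · simp [rescaledGradient, hg, Real.zero_rpow (sub_ne_zero.mpr hp.symm)]
  · have hg' : 0 < ‖g‖ := norm_pos_iff.mpr hg
    rw [rescaledGradient, if_neg hg, real_inner_smul_right, real_inner_self_eq_norm_sq,
      Real.rpow_sub hg', Real.rpow_two]
    ring

lemma HasDerivAt.comp_rescaledGradient_flow [CompleteSpace E] [DecidableEq E]
    {f : E → ℝ} {x : ℝ → E} {p t : ℝ} (hp : p ≠ 2) (hf : DifferentiableAt ℝ f (x t))
    (hx : HasDerivAt x (rescaledGradient p (gradient f (x t))) t) :
    HasDerivAt (fun s ↦ f (x s)) (-‖gradient f (x t)‖ ^ (2 - p)) t := by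
  rw [← inner_rescaledGradient hp]
  exact hf.hasGradientAt.hasFDerivAt.comp_hasDerivAt t hx

end RescaledGradient

theorem rescaled_gradient_flow_finite_time_PL_general
    {n : ℕ} (f : EuclideanSpace ℝ (Fin n) → ℝ) (hf : ContDiff ℝ 1 f)
    (μf : ℝ) (hμf : 0 < μf)
    (xstar : EuclideanSpace ℝ (Fin n))
    (hmin : ∀ y, f xstar ≤ f y)
    (hPL : ∀ y : EuclideanSpace ℝ (Fin n),
      μf * (f y - f xstar) ≤ (1 / 2) * ‖gradient f y‖ ^ 2)
    (x : ℝ → EuclideanSpace ℝ (Fin n))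
    (hx : ∀ t : ℝ, 0 ≤ t → HasDerivAt x
      (if gradient f (x t) = 0 then 0
       else -(‖gradient f (x t)‖ ^ ((1 : ℝ) / 2))⁻¹ • gradient f (x t)) t) :
    ∀ t : ℝ,
      8 * ((1 / 2) * (f (x 0) - f xstar) ^ 2) ^ ((1 : ℝ) / 8) / (2 * μf) ^ ((3 : ℝ) / 4) ≤ t →
      f (x t) = f xstar := by
  intro t ht
  set c := (2 * μf) ^ ((3 : ℝ) / 4)
  have hgap : ∀ s, 0 ≤ f (x s) - f xstar := fun s ↦ sub_nonneg.mpr (hmin (x s))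
  have hdecay : ∀ s, 0 ≤ s → HasDerivAt (fun s ↦ f (x s) - f xstar)
      (-‖gradient f (x s)‖ ^ (2 - (1 : ℝ) / 2)) s := fun s hs ↦
    (HasDerivAt.comp_rescaledGradient_flow (by norm_num) (hf.differentiable one_ne_zero _)
      (hx s hs)).sub_const _
  have hrate : ∀ s, 0 ≤ s →
      -‖gradient f (x s)‖ ^ (2 - (1 : ℝ) / 2) ≤ -c * (f (x s) - f xstar) ^ ((3 : ℝ) / 4) := by
    intro s _
    have hPL₂ : 2 * μf * (f (x s) - f xstar) ≤ ‖gradient f (x s)‖ ^ 2 := by linarith [hPL (x s)]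
    have := rpow_le_rpow_two_mul_of_le_sq (q := 3 / 4) (by positivity [hgap s]) (norm_nonneg _)
      (by norm_num) hPL₂
    rw [Real.mul_rpow (by positivity) (hgap s)] at this
    norm_num at this ⊢
    linarith
  have htime : (f (x 0) - f xstar) ^ (1 - (3 : ℝ) / 4) / (c * (1 - 3 / 4)) ≤ t := by
    calc (f (x 0) - f xstar) ^ (1 - (3 : ℝ) / 4) / (c * (1 - 3 / 4))
        = 4 * (f (x 0) - f xstar) ^ ((1 : ℝ) / 4) / c := by norm_num; ring
      _ ≤ t := (div_le_div_of_nonneg_right (four_mul_rpow_quarter_le (hgap 0))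
          (by positivity)).trans ht
  exact sub_eq_zero.mp
    (eq_zero_of_hasDerivAt_le_neg_mul_rpow (by positivity) (by norm_num) hdecay
      (fun s _ ↦ hgap s) hrate htime)

/-- Rescaled gradient flow `ẋ = −∇f(x)/‖∇f(x)‖^{1/2}` reaches the minimum value of a
gradient-dominated (PL) function in finite time `8 (½(f(x(0))−f*)²)^{1/8} / (2μ_f)^{3/4}`. -/
theorem rescaled_gradient_flow_finite_time_PL
    {n : ℕ} (f : EuclideanSpace ℝ (Fin n) → ℝ) (hf : ContDiff ℝ 1 f)
    (μf : ℝ) (hμf : 0 < μf)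
    (xstar : EuclideanSpace ℝ (Fin n))
    (hmin : ∀ y, f xstar ≤ f y)
    (huniq : ∀ y, f y = f xstar → y = xstar)
    (hPL : ∀ y : EuclideanSpace ℝ (Fin n),
      μf * (f y - f xstar) ≤ (1 / 2) * ‖gradient f y‖ ^ 2)
    (x : ℝ → EuclideanSpace ℝ (Fin n))
    (hx : ∀ t : ℝ, 0 ≤ t → HasDerivAt x
      (if gradient f (x t) = 0 then 0
       else -(‖gradient f (x t)‖ ^ ((1 : ℝ) / 2))⁻¹ • gradient f (x t)) t) :
    ∀ t : ℝ,
      8 * ((1 / 2) * (f (x 0) - f xstar) ^ 2) ^ ((1 : ℝ) / 8) / (2 * μf) ^ ((3 : ℝ) / 4) ≤ t →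
      f (x t) = f xstar :=
  rescaled_gradient_flow_finite_time_PL_general f hf μf hμf xstar hmin hPL x hx
end

section
/- Fix p > 2 and set β₁ = p/(2(p−1)) ∈ (1/2, 1). Let f satisfy the strong-convexity bound ⟪v, ∇²f(x) v⟫ ≥ k‖v‖² (k > 0) with unique critical point x*. Let x : ℝ → ℝⁿ be any trajectory of the modified gradient flow ẋ = −∇f(x)/‖∇f(x)‖^{(p−2)/(p−1)} (right-hand side taken to be 0 when ∇f(x) = 0). Then x(t) = x* for every t ≥ ‖∇f(x(0))‖^{2−2β₁}/(2k(1−β₁)). -/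
open scoped RealInnerProductSpace

open Set

/-!
Put `V t = ‖∇f(x t)‖²`. The exponent `(p - 2)/(p - 1)` of the flow equals `2 - 2β₁`, so the chain
rule and `∇²f ⪰ kI` give `V' ≤ -2k V ^ β₁` along the trajectory. For a nonnegative function with
`V' ≤ -c V ^ β` and `β < 1`, the power `V ^ (1 - β)` decreases at rate at least `c (1 - β)` as long
as `V > 0`, so `V` vanishes from time `V(0) ^ (1 - β) / (c (1 - β))` on. Finally `∇f(x t) = 0`
forces `x t = x*`, because `∇²f ⪰ kI` makes `∇f` strongly monotone.
-/

section Extinction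

variable {V V' : ℝ → ℝ} {c β : ℝ}

theorem rpow_one_sub_le_of_hasDerivAt_le_neg_mul_rpow (hβ : β ≤ 1) {a b : ℝ} (hab : a ≤ b)
    (hV : ∀ t ∈ Icc a b, HasDerivAt V (V' t) t) (hV_pos : ∀ t ∈ Icc a b, 0 < V t)
    (hV' : ∀ t ∈ Icc a b, V' t ≤ -c * V t ^ β) :
    V b ^ (1 - β) ≤ V a ^ (1 - β) - c * (1 - β) * (b - a) := by
  have hW : ∀ t ∈ Icc a b, HasDerivAt (fun s => V s ^ (1 - β))
      (V' t * (1 - β) * V t ^ (1 - β - 1)) t :=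
    fun t ht => (hV t ht).rpow_const (Or.inl (hV_pos t ht).ne')
  have hW' : ∀ t ∈ Icc a b, V' t * (1 - β) * V t ^ (1 - β - 1) ≤ -(c * (1 - β)) := by
    intro t ht
    have hVt := hV_pos t ht
    have hcancel : V t ^ β * V t ^ (1 - β - 1) = 1 := by
      rw [← Real.rpow_add hVt, show β + (1 - β - 1) = 0 by ring, Real.rpow_zero]
    have := mul_le_mul_of_nonneg_right (hV' t ht)
      (mul_nonneg (sub_nonneg.2 hβ) (Real.rpow_nonneg hVt.le (1 - β - 1)))
    linear_combination this - c * (1 - β) * hcancel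
  have := (convex_Icc a b).image_sub_le_mul_sub_of_deriv_le
    (fun t ht => (hW t ht).continuousAt.continuousWithinAt)
    (fun t ht => (hW t (interior_subset ht)).differentiableAt.differentiableWithinAt)
    (fun t ht => (hW t (interior_subset ht)).deriv ▸ hW' t (interior_subset ht))
    a (left_mem_Icc.2 hab) b (right_mem_Icc.2 hab) hab
  linarith

theorem eq_zero_of_hasDerivAt_le_neg_mul_rpow_s2 (hc : 0 < c) (hβ : β < 1)
    (hV_nonneg : ∀ t, 0 ≤ t → 0 ≤ V t) (hV : ∀ t, 0 ≤ t → HasDerivAt V (V' t) t)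
    (hV' : ∀ t, 0 ≤ t → V' t ≤ -c * V t ^ β) {t : ℝ}
    (ht : V 0 ^ (1 - β) / (c * (1 - β)) ≤ t) : V t = 0 := by
  have hcβ : 0 < c * (1 - β) := mul_pos hc (sub_pos.2 hβ)
  have ht₀ : 0 ≤ t := le_trans (div_nonneg (Real.rpow_nonneg (hV_nonneg 0 le_rfl) _) hcβ.le) ht
  have hanti : AntitoneOn V (Ici 0) := by
    refine antitoneOn_of_hasDerivWithinAt_nonpos (f' := V') (convex_Ici 0)
      (fun s hs => (hV s hs).continuousAt.continuousWithinAt) (fun s hs => ?_) (fun s hs => ?_)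
    · exact (hV s (interior_subset hs)).hasDerivWithinAt
    · have hs := interior_subset (s := Ici (0 : ℝ)) hs
      nlinarith [hV' s hs, Real.rpow_nonneg (hV_nonneg s hs) β]
  by_contra hVt_ne
  have hpos : ∀ s ∈ Icc 0 t, 0 < V s := fun s hs =>
    lt_of_lt_of_le ((hV_nonneg t ht₀).lt_of_ne' hVt_ne) (hanti hs.1 ht₀ hs.2)
  have hdecay := rpow_one_sub_le_of_hasDerivAt_le_neg_mul_rpow hβ.le ht₀
    (fun s hs => hV s hs.1) hpos (fun s hs => hV' s hs.1)
  have hct : V 0 ^ (1 - β) ≤ c * (1 - β) * t := by rwa [div_le_iff₀' hcβ] at ht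
  have := Real.rpow_pos_of_pos (hpos t (right_mem_Icc.2 ht₀)) (1 - β)
  linarith

end Extinction

section InnerProductSpace

variable {E : Type*} [NormedAddCommGroup E] [InnerProductSpace ℝ E]

noncomputable def modifiedFlowField [DecidableEq E] (α : ℝ) (v : E) : E :=
  if v = 0 then 0 else -(‖v‖ ^ α)⁻¹ • v

theorem inner_apply_modifiedFlowField_le [DecidableEq E] {H : E →L[ℝ] E} {k β : ℝ} (hβ : β ≠ 0)
    (hH : ∀ v, k * ‖v‖ ^ 2 ≤ ⟪v, H v⟫) (v : E) :
    ⟪v, H (modifiedFlowField (2 - 2 * β) v)⟫ ≤ -k * (‖v‖ ^ 2) ^ β := by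
  rcases eq_or_ne v 0 with rfl | hv
  · simp [modifiedFlowField, Real.zero_rpow hβ]
  have hv' : 0 < ‖v‖ := norm_pos_iff.2 hv
  have hsplit : ‖v‖ ^ 2 = ‖v‖ ^ (2 - 2 * β) * (‖v‖ ^ 2) ^ β := by
    rw [← Real.rpow_natCast, ← Real.rpow_mul hv'.le, ← Real.rpow_add hv']
    norm_num
  rw [modifiedFlowField, if_neg hv, map_smul, inner_smul_right, neg_mul, neg_mul, neg_le_neg_iff,
    inv_mul_eq_div, le_div_iff₀' (by positivity), ← mul_left_comm, ← hsplit]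
  exact hH v

theorem ContDiff.differentiable_gradient [CompleteSpace E] {f : E → ℝ} (hf : ContDiff ℝ 2 f) :
    Differentiable ℝ (gradient f) :=
  (InnerProductSpace.toDual ℝ E).symm.differentiable.comp
    ((hf.fderiv_right (m := 1) (by norm_num)).differentiable one_ne_zero)

variable {G : E → E} {k : ℝ}

theorem mul_norm_sub_sq_le_inner_sub_of_fderiv (hG : Differentiable ℝ G)
    (hG' : ∀ y v, k * ‖v‖ ^ 2 ≤ ⟪v, fderiv ℝ G y v⟫) (x y : E) :
    k * ‖y - x‖ ^ 2 ≤ ⟪G y - G x, y - x⟫ := by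
  set d := y - x
  have hφ : ∀ s : ℝ,
      HasDerivAt (fun s : ℝ => ⟪G (x + s • d), d⟫) ⟪fderiv ℝ G (x + s • d) d, d⟫ s := by
    intro s
    have hline : HasDerivAt (fun s : ℝ => x + s • d) d s := by
      simpa using ((hasDerivAt_id s).smul_const d).const_add x
    simpa using ((hG _).hasFDerivAt.comp_hasDerivAt s hline).inner ℝ (hasDerivAt_const s d)
  have := mul_sub_le_image_sub_of_le_deriv (fun s => (hφ s).differentiableAt)
    (fun s => (hφ s).deriv ▸ real_inner_comm d _ ▸ hG' (x + s • d) d) zero_le_one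
  simpa [d, inner_sub_left] using this

theorem eq_of_apply_eq_zero_of_fderiv (hG : Differentiable ℝ G) (hk : 0 < k)
    (hG' : ∀ y v, k * ‖v‖ ^ 2 ≤ ⟪v, fderiv ℝ G y v⟫) {x y : E} (hx : G x = 0) (hy : G y = 0) :
    y = x := by
  have := mul_norm_sub_sq_le_inner_sub_of_fderiv hG hG' x y
  rw [hx, hy, sub_zero, inner_zero_left] at this
  exact sub_eq_zero.1 (norm_eq_zero.1 (pow_eq_zero_iff two_ne_zero |>.1
    (le_antisymm (nonpos_of_mul_nonpos_right this hk) (by positivity))))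

end InnerProductSpace

/-- Modified gradient flow `ẋ = −∇f(x)/‖∇f(x)‖^{(p−2)/(p−1)}`, `p > 2`, reaches the unique
critical point of a strongly convex `f` in finite time `‖∇f(x(0))‖^{2−2β₁}/(2k(1−β₁))`,
where `β₁ = p/(2(p−1))`. -/
theorem modified_gradient_flow_finite_time_strong_convex
    {n : ℕ} (p : ℝ) (hp : 2 < p) (β₁ : ℝ) (hβ₁ : β₁ = p / (2 * (p - 1)))
    (f : EuclideanSpace ℝ (Fin n) → ℝ) (hf : ContDiff ℝ 2 f)
    (k : ℝ) (hk : 0 < k)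
    (hconv : ∀ x v : EuclideanSpace ℝ (Fin n),
      k * ‖v‖ ^ 2 ≤ ⟪v, fderiv ℝ (gradient f) x v⟫)
    (xstar : EuclideanSpace ℝ (Fin n)) (hxstar : gradient f xstar = 0)
    (x : ℝ → EuclideanSpace ℝ (Fin n))
    (hx : ∀ t : ℝ, 0 ≤ t → HasDerivAt x
      (if gradient f (x t) = 0 then 0
       else -(‖gradient f (x t)‖ ^ ((p - 2) / (p - 1)))⁻¹ • gradient f (x t)) t) :
    ∀ t : ℝ, ‖gradient f (x 0)‖ ^ (2 - 2 * β₁) / (2 * k * (1 - β₁)) ≤ t → x t = xstar := by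
  intro t ht
  have hp₁ : 0 < p - 1 := by linarith
  have hβ₁_pos : 0 < β₁ := hβ₁ ▸ by positivity
  have hβ₁_lt_one : β₁ < 1 := by rw [hβ₁, div_lt_one (by positivity)]; linarith
  have hα : (p - 2) / (p - 1) = 2 - 2 * β₁ := by rw [hβ₁]; field_simp; ring
  have hG := hf.differentiable_gradient
  have hV : ∀ s, 0 ≤ s → HasDerivAt (fun s => ‖gradient f (x s)‖ ^ 2)
      (2 * ⟪gradient f (x s), fderiv ℝ (gradient f) (x s)
        (modifiedFlowField (2 - 2 * β₁) (gradient f (x s)))⟫) s := fun s hs =>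
    ((hG _).hasFDerivAt.comp_hasDerivAt s (hα ▸ hx s hs)).norm_sq
  have hV₀ : (‖gradient f (x 0)‖ ^ 2) ^ (1 - β₁) = ‖gradient f (x 0)‖ ^ (2 - 2 * β₁) := by
    rw [← Real.rpow_natCast, ← Real.rpow_mul (norm_nonneg _)]
    ring_nf
  have hVt : ‖gradient f (x t)‖ ^ 2 = 0 :=
    eq_zero_of_hasDerivAt_le_neg_mul_rpow_s2 (mul_pos two_pos hk) hβ₁_lt_one
      (fun _ _ => by positivity) hV
      (fun s _ => by
        linarith [inner_apply_modifiedFlowField_le hβ₁_pos.ne' (hconv (x s)) (gradient f (x s))])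
      (by rwa [hV₀])
  exact eq_of_apply_eq_zero_of_fderiv hG hk hconv hxstar (by simpa using hVt)
end

section
/- Fix c₁, c₂ > 0, p₁ > 2, 1 < p₂ < 2, and set α₁ = 2 − (p₁−2)/(p₁−1) ∈ (1,2) and α₂ = 2 − (p₂−2)/(p₂−1) > 2. Let f satisfy the Polyak–Łojasiewicz inequality with constant μ_f > 0 and have unique minimizer x* with f* = f(x*). Let x : ℝ → ℝⁿ be any trajectory of the flow ẋ = −c₁∇f(x)/‖∇f(x)‖^{(p₁−2)/(p₁−1)} − c₂∇f(x)/‖∇f(x)‖^{(p₂−2)/(p₂−1)} (right-hand side taken to be 0 when ∇f(x) = 0). Then, regardless of the initial condition x(0), f(x(t)) = f* for every t ≥ T₃ := 4/(c₁ (2μ_f)^{α₁/2} (2−α₁)) + 4/(c₂ (2μ_f)^{α₂/2} (α₂−2)). -/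
open scoped RealInnerProductSpace Classical

open Real Set

/-! Along the flow, `V t = f (x t) - f*` satisfies `V' = -(c₁‖∇f‖^α₁ + c₂‖∇f‖^α₂)`, and the PL
inequality `‖∇f‖² ≥ 2μ_f V` turns this into `V' ≤ -(C₁ V^{α₁/2} + C₂ V^{α₂/2})` with
`Cᵢ = cᵢ (2μ_f)^{αᵢ/2}`. For an exponent `β ≠ 1` the quantity `V^{1-β}/(1-β) + C t` does not
increase under `V' ≤ -C V^β`. With `β = α₂/2 > 1` this brings `V` below `1` by the time
`1/(C₂(α₂/2-1))` from any starting value; with `β = α₁/2 < 1` it then brings `V` to `0` within a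
further time `1/(C₁(1-α₁/2))`. The sum of these two times is half of `T₃`. -/

section Decay

variable {V V' : ℝ → ℝ} {a b β β₁ β₂ t t₀ t₁ : ℝ}

lemma antitoneOn_rpow_one_sub_div_add_mul (hβ : β ≠ 1)
    (hV : ∀ s ∈ Icc t₀ t₁, HasDerivAt V (V' s) s) (hpos : ∀ s ∈ Icc t₀ t₁, 0 < V s)
    (hdecay : ∀ s ∈ Icc t₀ t₁, V' s ≤ -(a * V s ^ β)) :
    AntitoneOn (fun s => V s ^ (1 - β) / (1 - β) + a * s) (Icc t₀ t₁) := by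
  have hβ' : 1 - β ≠ 0 := sub_ne_zero.2 hβ.symm
  have hderiv : ∀ s ∈ Icc t₀ t₁, HasDerivAt (fun s => V s ^ (1 - β) / (1 - β) + a * s)
      (V' s * V s ^ (-β) + a) s := by
    intro s hs
    refine ((((hV s hs).rpow_const (Or.inl (hpos s hs).ne')).div_const (1 - β)).add
      ((hasDerivAt_id s).const_mul a)).congr_deriv ?_
    rw [sub_sub_cancel_left]
    field_simp
  refine antitoneOn_of_hasDerivWithinAt_nonpos (convex_Icc _ _)
    (fun s hs => (hderiv s hs).continuousAt.continuousWithinAt)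
    (fun s hs => (hderiv s (interior_subset hs)).hasDerivWithinAt) (fun s hs => ?_)
  replace hs := interior_subset hs
  calc V' s * V s ^ (-β) + a ≤ -(a * V s ^ β) * V s ^ (-β) + a := by
        gcongr
        · exact (rpow_pos_of_pos (hpos s hs) _).le
        · exact hdecay s hs
    _ = 0 := by
        rw [rpow_neg (hpos s hs).le]
        field_simp [(rpow_pos_of_pos (hpos s hs) β).ne']
        ring

lemma rpow_one_sub_add_le_of_decay_of_lt_one (hβ : β < 1) (h : t₀ ≤ t₁)
    (hV : ∀ s ∈ Icc t₀ t₁, HasDerivAt V (V' s) s) (hpos : ∀ s ∈ Icc t₀ t₁, 0 < V s)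
    (hdecay : ∀ s ∈ Icc t₀ t₁, V' s ≤ -(a * V s ^ β)) :
    V t₁ ^ (1 - β) + a * (1 - β) * (t₁ - t₀) ≤ V t₀ ^ (1 - β) := by
  have hmono := antitoneOn_rpow_one_sub_div_add_mul hβ.ne hV hpos hdecay
    (left_mem_Icc.2 h) (right_mem_Icc.2 h) h
  have hβ' : 0 < 1 - β := by linarith
  simp only at hmono
  rw [div_add' _ _ _ hβ'.ne', div_add' _ _ _ hβ'.ne', div_le_div_iff_of_pos_right hβ'] at hmono
  linarith

lemma rpow_one_sub_add_le_of_decay_of_one_lt (hβ : 1 < β) (h : t₀ ≤ t₁)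
    (hV : ∀ s ∈ Icc t₀ t₁, HasDerivAt V (V' s) s) (hpos : ∀ s ∈ Icc t₀ t₁, 0 < V s)
    (hdecay : ∀ s ∈ Icc t₀ t₁, V' s ≤ -(a * V s ^ β)) :
    V t₀ ^ (1 - β) + a * (β - 1) * (t₁ - t₀) ≤ V t₁ ^ (1 - β) := by
  have hmono := antitoneOn_rpow_one_sub_div_add_mul hβ.ne' hV hpos hdecay
    (left_mem_Icc.2 h) (right_mem_Icc.2 h) h
  have hβ' : 1 - β < 0 := by linarith
  simp only at hmono
  rw [div_add' _ _ _ hβ'.ne, div_add' _ _ _ hβ'.ne, div_le_div_right_of_neg hβ'] at hmono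
  linarith

theorem eq_zero_of_two_rate_decay (ha : 0 < a) (hb : 0 < b)
    (hβ₁ : β₁ < 1) (hβ₂ : 1 < β₂)
    (hV : ∀ s, 0 ≤ s → HasDerivAt V (V' s) s) (hnonneg : ∀ s, 0 ≤ s → 0 ≤ V s)
    (hdecay : ∀ s, 0 ≤ s → V' s ≤ -(a * V s ^ β₁ + b * V s ^ β₂))
    (ht : 1 / (a * (1 - β₁)) + 1 / (b * (β₂ - 1)) ≤ t) :
    V t = 0 := by
  set T₁ := 1 / (a * (1 - β₁))
  set T₂ := 1 / (b * (β₂ - 1))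
  have hT₁ : 0 < T₁ := one_div_pos.2 (mul_pos ha (by linarith))
  have hT₂ : 0 < T₂ := one_div_pos.2 (mul_pos hb (by linarith))
  have hdecay₁ : ∀ s, 0 ≤ s → V' s ≤ -(a * V s ^ β₁) := fun s hs => by
    linarith [hdecay s hs, mul_nonneg hb.le (rpow_nonneg (hnonneg s hs) β₂)]
  have hdecay₂ : ∀ s, 0 ≤ s → V' s ≤ -(b * V s ^ β₂) := fun s hs => by
    linarith [hdecay s hs, mul_nonneg ha.le (rpow_nonneg (hnonneg s hs) β₁)]
  have hanti : AntitoneOn V (Ici 0) := by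
    refine antitoneOn_of_hasDerivWithinAt_nonpos (convex_Ici 0)
      (fun s hs => (hV s hs).continuousAt.continuousWithinAt)
      (fun s hs => (hV s (interior_subset hs)).hasDerivWithinAt) (fun s hs => ?_)
    replace hs : 0 ≤ s := interior_subset hs
    linarith [hdecay₁ s hs, mul_nonneg ha.le (rpow_nonneg (hnonneg s hs) β₁)]
  have ht₀ : 0 ≤ t := by linarith
  by_contra hVt
  have hVt : 0 < V t := (hnonneg t ht₀).lt_of_ne' hVt
  have hpos : ∀ s ∈ Icc 0 t, 0 < V s := fun s hs =>
    hVt.trans_le (hanti hs.1 ht₀ hs.2)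
  have hT₂t : T₂ ≤ t := by linarith
  have hVT₂ : V T₂ < 1 := by
    have h := rpow_one_sub_add_le_of_decay_of_one_lt hβ₂ hT₂.le
      (fun s hs => hV s hs.1) (fun s hs => hpos s ⟨hs.1, hs.2.trans hT₂t⟩)
      (fun s hs => hdecay₂ s hs.1)
    have hbT₂ : b * (β₂ - 1) * (T₂ - 0) = 1 := by
      simp only [T₂, sub_zero]; field_simp [show β₂ - 1 ≠ 0 by linarith]
    have h0 : 0 < V 0 ^ (1 - β₂) := rpow_pos_of_pos (hpos 0 ⟨le_rfl, ht₀⟩) _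
    have h1 : 1 < V T₂ ^ (1 - β₂) := by linarith
    rcases (one_lt_rpow_iff_of_pos (hpos T₂ ⟨hT₂.le, hT₂t⟩)).1 h1 with h | h
    · linarith [h.2]
    · exact h.1
  have h := rpow_one_sub_add_le_of_decay_of_lt_one hβ₁ hT₂t
    (fun s hs => hV s (hT₂.le.trans hs.1)) (fun s hs => hpos s ⟨hT₂.le.trans hs.1, hs.2⟩)
    (fun s hs => hdecay₁ s (hT₂.le.trans hs.1))
  have haT₁ : a * (1 - β₁) * T₁ = 1 := by
    simp only [T₁]; field_simp [show 1 - β₁ ≠ 0 by linarith]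
  have h0 : 0 < V t ^ (1 - β₁) := rpow_pos_of_pos hVt _
  have h1 : V T₂ ^ (1 - β₁) < 1 := rpow_lt_one (hpos T₂ ⟨hT₂.le, hT₂t⟩).le hVT₂ (by linarith)
  nlinarith [mul_pos ha (show 0 < 1 - β₁ by linarith)]

end Decay

section GradientFlow

variable {E : Type*} [NormedAddCommGroup E] [InnerProductSpace ℝ E]

lemma HasGradientAt.hasDerivAt_comp [CompleteSpace E] {f : E → ℝ} {x : ℝ → E} {g v : E} {t : ℝ}
    (hf : HasGradientAt f g (x t)) (hx : HasDerivAt x v t) :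
    HasDerivAt (fun s => f (x s)) ⟪g, v⟫ t := by
  have h := hf.hasFDerivAt.comp_hasDerivAt t hx
  rwa [InnerProductSpace.toDual_apply_apply] at h

lemma inner_ite_neg_smul_sub_smul (c₁ c₂ : ℝ) {γ₁ γ₂ : ℝ} (hγ₁ : γ₁ ≠ 2) (hγ₂ : γ₂ ≠ 2)
    (g : E) [Decidable (g = 0)] :
    ⟪g, if g = 0 then 0 else -((c₁ / ‖g‖ ^ γ₁) • g) - (c₂ / ‖g‖ ^ γ₂) • g⟫
      = -(c₁ * ‖g‖ ^ (2 - γ₁) + c₂ * ‖g‖ ^ (2 - γ₂)) := by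
  split_ifs with hg
  · rw [hg, norm_zero, zero_rpow (sub_ne_zero.2 hγ₁.symm), zero_rpow (sub_ne_zero.2 hγ₂.symm)]
    simp
  · have hg : 0 < ‖g‖ := norm_pos_iff.2 hg
    rw [inner_sub_right, inner_neg_right, real_inner_smul_right, real_inner_smul_right,
      real_inner_self_eq_norm_sq, ← rpow_two, rpow_sub hg, rpow_sub hg]
    ring

lemma rpow_half_mul_rpow_half_le {μ v r α : ℝ} (hμ : 0 ≤ μ) (hv : 0 ≤ v) (hr : 0 ≤ r)
    (hα : 0 ≤ α) (h : μ * v ≤ 1 / 2 * r ^ 2) :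
    (2 * μ) ^ (α / 2) * v ^ (α / 2) ≤ r ^ α := by
  rw [← mul_rpow (by positivity) hv]
  calc (2 * μ * v) ^ (α / 2) ≤ (r ^ 2) ^ (α / 2) := by gcongr; linarith
    _ = r ^ α := by rw [← rpow_natCast, ← rpow_mul hr]; ring_nf

end GradientFlow

theorem fixed_time_gradient_flow_PL_general
    {n : ℕ} (c₁ c₂ p₁ p₂ : ℝ) (hc₁ : 0 < c₁) (hc₂ : 0 < c₂)
    (hp₁ : 2 < p₁) (hp₂ : 1 < p₂) (hp₂' : p₂ < 2)
    (α₁ α₂ : ℝ) (hα₁ : α₁ = 2 - (p₁ - 2) / (p₁ - 1)) (hα₂ : α₂ = 2 - (p₂ - 2) / (p₂ - 1))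
    (f : EuclideanSpace ℝ (Fin n) → ℝ) (hf : ContDiff ℝ 1 f)
    (μf : ℝ) (hμf : 0 < μf)
    (xstar : EuclideanSpace ℝ (Fin n))
    (hmin : ∀ y, f xstar ≤ f y)
    (hPL : ∀ y : EuclideanSpace ℝ (Fin n),
      μf * (f y - f xstar) ≤ (1 / 2) * ‖gradient f y‖ ^ 2)
    (x : ℝ → EuclideanSpace ℝ (Fin n))
    (hx : ∀ t : ℝ, 0 ≤ t → HasDerivAt x
      (if gradient f (x t) = 0 then 0
       else -((c₁ / ‖gradient f (x t)‖ ^ ((p₁ - 2) / (p₁ - 1))) • gradient f (x t))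
            - (c₂ / ‖gradient f (x t)‖ ^ ((p₂ - 2) / (p₂ - 1))) • gradient f (x t)) t) :
    ∀ t : ℝ,
      4 / (c₁ * (2 * μf) ^ (α₁ / 2) * (2 - α₁)) + 4 / (c₂ * (2 * μf) ^ (α₂ / 2) * (α₂ - 2)) ≤ t →
      f (x t) = f xstar := by
  intro t ht
  have hγ₁ : 0 < (p₁ - 2) / (p₁ - 1) := div_pos (by linarith) (by linarith)
  have hγ₁' : (p₁ - 2) / (p₁ - 1) < 1 := (div_lt_one (by linarith)).2 (by linarith)
  have hγ₂ : (p₂ - 2) / (p₂ - 1) < 0 := div_neg_of_neg_of_pos (by linarith) (by linarith)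
  have hV : ∀ s, 0 ≤ s → HasDerivAt (fun s => f (x s) - f xstar)
      (-(c₁ * ‖gradient f (x s)‖ ^ α₁ + c₂ * ‖gradient f (x s)‖ ^ α₂)) s := by
    intro s hs
    have h := (((hf.differentiable one_ne_zero) (x s)).hasGradientAt.hasDerivAt_comp
      (hx s hs)).sub_const (f xstar)
    rwa [inner_ite_neg_smul_sub_smul c₁ c₂ (by linarith) (by linarith), ← hα₁, ← hα₂] at h
  have hdecay : ∀ s, 0 ≤ s →
      -(c₁ * ‖gradient f (x s)‖ ^ α₁ + c₂ * ‖gradient f (x s)‖ ^ α₂) ≤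
      -(c₁ * (2 * μf) ^ (α₁ / 2) * (f (x s) - f xstar) ^ (α₁ / 2)
        + c₂ * (2 * μf) ^ (α₂ / 2) * (f (x s) - f xstar) ^ (α₂ / 2)) := by
    intro s _
    have hbound := fun α (hα : 0 ≤ α) => rpow_half_mul_rpow_half_le hμf.le
      (sub_nonneg.2 (hmin (x s))) (norm_nonneg _) hα (hPL (x s))
    rw [mul_assoc c₁, mul_assoc c₂]
    gcongr
    exacts [hbound α₁ (by linarith), hbound α₂ (by linarith)]
  have hT : ∀ C δ : ℝ, 0 < C → 0 < δ → 1 / (C * (δ / 2)) ≤ 4 / (C * δ) := fun C δ hC hδ => by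
    rw [div_le_div_iff₀ (by positivity) (by positivity)]
    nlinarith [mul_pos hC hδ]
  have hVt := eq_zero_of_two_rate_decay (by positivity) (by positivity)
    (show α₁ / 2 < 1 by linarith) (show 1 < α₂ / 2 by linarith) hV
    (fun s _ => sub_nonneg.2 (hmin (x s))) hdecay (t := t) (by
      rw [show 1 - α₁ / 2 = (2 - α₁) / 2 by ring, show α₂ / 2 - 1 = (α₂ - 2) / 2 by ring]
      linarith [hT (c₁ * (2 * μf) ^ (α₁ / 2)) (2 - α₁) (by positivity) (by linarith),
        hT (c₂ * (2 * μf) ^ (α₂ / 2)) (α₂ - 2) (by positivity) (by linarith)])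
  exact sub_eq_zero.1 hVt

/-- The flow `ẋ = −c₁∇f/‖∇f‖^{(p₁−2)/(p₁−1)} − c₂∇f/‖∇f‖^{(p₂−2)/(p₂−1)}` drives a
gradient-dominated (PL) function to its minimum value within the fixed time
`T₃ = 4/(c₁(2μ_f)^{α₁/2}(2−α₁)) + 4/(c₂(2μ_f)^{α₂/2}(α₂−2))`, uniformly in the initial
condition. -/
theorem fixed_time_gradient_flow_PL
    {n : ℕ} (c₁ c₂ p₁ p₂ : ℝ) (hc₁ : 0 < c₁) (hc₂ : 0 < c₂)
    (hp₁ : 2 < p₁) (hp₂ : 1 < p₂) (hp₂' : p₂ < 2)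
    (α₁ α₂ : ℝ) (hα₁ : α₁ = 2 - (p₁ - 2) / (p₁ - 1)) (hα₂ : α₂ = 2 - (p₂ - 2) / (p₂ - 1))
    (f : EuclideanSpace ℝ (Fin n) → ℝ) (hf : ContDiff ℝ 1 f)
    (μf : ℝ) (hμf : 0 < μf)
    (xstar : EuclideanSpace ℝ (Fin n))
    (hmin : ∀ y, f xstar ≤ f y)
    (huniq : ∀ y, f y = f xstar → y = xstar)
    (hPL : ∀ y : EuclideanSpace ℝ (Fin n),
      μf * (f y - f xstar) ≤ (1 / 2) * ‖gradient f y‖ ^ 2)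
    (x : ℝ → EuclideanSpace ℝ (Fin n))
    (hx : ∀ t : ℝ, 0 ≤ t → HasDerivAt x
      (if gradient f (x t) = 0 then 0
       else -((c₁ / ‖gradient f (x t)‖ ^ ((p₁ - 2) / (p₁ - 1))) • gradient f (x t))
            - (c₂ / ‖gradient f (x t)‖ ^ ((p₂ - 2) / (p₂ - 1))) • gradient f (x t)) t) :
    ∀ t : ℝ,
      4 / (c₁ * (2 * μf) ^ (α₁ / 2) * (2 - α₁)) + 4 / (c₂ * (2 * μf) ^ (α₂ / 2) * (α₂ - 2)) ≤ t →
      f (x t) = f xstar :=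
  fixed_time_gradient_flow_PL_general c₁ c₂ p₁ p₂ hc₁ hc₂ hp₁ hp₂ hp₂' α₁ α₂ hα₁ hα₂ f hf μf hμf
    xstar hmin hPL x hx
end

section
/- Let f : ℝⁿ → ℝ be convex, differentiable, with L-Lipschitz gradient (L > 0). Let A be a real m×n matrix of rank m (full row rank) and b ∈ ℝᵐ. Suppose that for every ν ∈ ℝᵐ the set { ⟪−Aᵀν, x⟫ − f(x) : x ∈ ℝⁿ } is bounded above, and define f*(−Aᵀν) as its supremum (the convex conjugate of f evaluated at −Aᵀν). Then the dual function g(ν) = −⟪ν, b⟫ − f*(−Aᵀν) is strictly concave on ℝᵐ. -/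
/-!
An `L`-smooth `f` satisfies the descent inequality `f (x + h) ≤ f x + ⟪∇f x, h⟫ + L/2 ‖h‖²`.
Testing the suprema defining `f* y₁` and `f* y₂` at `x + (b/L) • (y₁ - y₂)` and
`x - (a/L) • (y₁ - y₂)` against `⟪a • y₁ + b • y₂, x⟫ - f x`, the gradient terms cancel and
`f*` turns out to be `1/L`-strongly convex wherever it is finite. As `Aᵀ` is injective,
`ν ↦ f* (-Aᵀ ν)` is strictly convex, and the dual function is a linear function minus it.
-/

open scoped RealInnerProductSpace
open Matrix

theorem StrictConvexOn.comp_linearMap {𝕜 E F β : Type*} [Semiring 𝕜] [PartialOrder 𝕜]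
    [AddCommMonoid E] [AddCommMonoid F] [AddCommMonoid β] [PartialOrder β]
    [Module 𝕜 E] [Module 𝕜 F] [SMul 𝕜 β] {f : F → β} {s : Set F}
    (hf : StrictConvexOn 𝕜 s f) {g : E →ₗ[𝕜] F} (hg : Function.Injective g) :
    StrictConvexOn 𝕜 (g ⁻¹' s) (f ∘ g) :=
  ⟨hf.1.linear_preimage _, fun x hx y hy hxy a b ha hb hab => by
    simpa only [Function.comp, map_add, map_smul] using hf.2 hx hy (hg.ne hxy) ha hb hab⟩

theorem Matrix.injective_toEuclideanLin_of_rank_eq {𝕜 m n : Type*} [RCLike 𝕜] [Fintype m]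
    [Fintype n] [DecidableEq m] {B : Matrix n m 𝕜} (hB : B.rank = Fintype.card m) :
    Function.Injective (toEuclideanLin B) := by
  have hrange : Module.finrank 𝕜 (LinearMap.range (toEuclideanLin B)) = Fintype.card m := by
    rw [← hB, rank_eq_finrank_range_toLin B (EuclideanSpace.basisFun n 𝕜).toBasis
      (EuclideanSpace.basisFun m 𝕜).toBasis, toEuclideanLin_eq_toLin_orthonormal]
  have hker := (toEuclideanLin B).finrank_range_add_finrank_ker
  rw [hrange, finrank_euclideanSpace, Nat.add_eq_left, Submodule.finrank_eq_zero] at hker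
  exact LinearMap.ker_eq_bot.mp hker

section InnerProductSpace

variable {E : Type*} [NormedAddCommGroup E] [InnerProductSpace ℝ E]

theorem Differentiable.le_add_inner_gradient_add_sq [CompleteSpace E] {f : E → ℝ}
    (hdiff : Differentiable ℝ f) {L : NNReal} (hlip : LipschitzWith L (gradient f)) (x h : E) :
    f (x + h) ≤ f x + ⟪gradient f x, h⟫ + L / 2 * ‖h‖ ^ 2 := by
  set φ : ℝ → ℝ := fun t => f (x + t • h) - t * ⟪gradient f x, h⟫ - L / 2 * t ^ 2 * ‖h‖ ^ 2
  have hderiv : ∀ t, HasDerivAt φ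
      (⟪gradient f (x + t • h) - gradient f x, h⟫ - L * t * ‖h‖ ^ 2) t := by
    intro t
    have hline : HasDerivAt (fun t : ℝ => x + t • h) h t := by
      simpa using ((hasDerivAt_id t).smul_const h).const_add x
    have hf := (hdiff (x + t • h)).hasGradientAt.hasFDerivAt.comp_hasDerivAt t hline
    refine ((hf.sub ((hasDerivAt_id t).mul_const ⟪gradient f x, h⟫)).sub
      (((hasDerivAt_pow 2 t).const_mul (L / 2 : ℝ)).mul_const (‖h‖ ^ 2))).congr_deriv ?_
    rw [InnerProductSpace.toDual_apply_apply, inner_sub_left]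
    push_cast
    ring
  have hderiv_nonpos : ∀ t ∈ interior (Set.Ici (0 : ℝ)),
      ⟪gradient f (x + t • h) - gradient f x, h⟫ - L * t * ‖h‖ ^ 2 ≤ 0 := by
    intro t ht
    rw [interior_Ici] at ht
    have hgrad : ‖gradient f (x + t • h) - gradient f x‖ ≤ L * (t * ‖h‖) := by
      simpa [dist_eq_norm, norm_smul, abs_of_pos (Set.mem_Ioi.mp ht)]
        using hlip.dist_le_mul (x + t • h) x
    rw [sub_nonpos]
    calc ⟪gradient f (x + t • h) - gradient f x, h⟫
        ≤ ‖gradient f (x + t • h) - gradient f x‖ * ‖h‖ := real_inner_le_norm _ _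
      _ ≤ L * (t * ‖h‖) * ‖h‖ := by gcongr
      _ = L * t * ‖h‖ ^ 2 := by ring
  have hanti : AntitoneOn φ (Set.Ici 0) :=
    antitoneOn_of_hasDerivWithinAt_nonpos (convex_Ici 0)
      (fun t _ => (hderiv t).continuousAt.continuousWithinAt)
      (fun t _ => (hderiv t).hasDerivWithinAt) hderiv_nonpos
  have hφ := hanti Set.self_mem_Ici (Set.mem_Ici.mpr zero_le_one) zero_le_one
  simp only [φ, one_smul, zero_smul, add_zero, one_mul, zero_mul, one_pow, mul_one,
    zero_pow two_ne_zero, mul_zero, sub_zero] at hφ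
  linarith

-- `sSup` of a set that is not bounded above is `0`, hence the `BddAbove` hypotheses below.
noncomputable def convexConjugate (f : E → ℝ) (y : E) : ℝ :=
  sSup (Set.range fun x => ⟪y, x⟫ - f x)

theorem inner_sub_le_convexConjugate {f : E → ℝ} {y : E}
    (hbdd : BddAbove (Set.range fun x => ⟪y, x⟫ - f x)) (x : E) :
    ⟪y, x⟫ - f x ≤ convexConjugate f y :=
  le_csSup hbdd ⟨x, rfl⟩

theorem strongConvexOn_convexConjugate [CompleteSpace E] {f : E → ℝ}
    (hdiff : Differentiable ℝ f) {L : NNReal} (hL : 0 < L)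
    (hlip : LipschitzWith L (gradient f)) {s : Set E} (hs : Convex ℝ s)
    (hbdd : ∀ y ∈ s, BddAbove (Set.range fun x => ⟪y, x⟫ - f x)) :
    StrongConvexOn s (L : ℝ)⁻¹ (convexConjugate f) := by
  refine ⟨hs, fun y₁ hy₁ y₂ hy₂ a b ha hb hab => csSup_le (Set.range_nonempty _) ?_⟩
  rintro _ ⟨x, rfl⟩
  set d := y₁ - y₂
  have h₁ : ⟪y₁, x⟫ + b / L * ⟪y₁, d⟫ - f (x + (b / L) • d) ≤ convexConjugate f y₁ := by
    have := inner_sub_le_convexConjugate (hbdd y₁ hy₁) (x + (b / L) • d)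
    rwa [inner_add_right, real_inner_smul_right] at this
  have h₂ : ⟪y₂, x⟫ - a / L * ⟪y₂, d⟫ - f (x - (a / L) • d) ≤ convexConjugate f y₂ := by
    have := inner_sub_le_convexConjugate (hbdd y₂ hy₂) (x - (a / L) • d)
    rwa [inner_sub_right, real_inner_smul_right] at this
  have hf₁ : f (x + (b / L) • d)
      ≤ f x + b / L * ⟪gradient f x, d⟫ + L / 2 * ((b / L) ^ 2 * ‖d‖ ^ 2) := by
    have := hdiff.le_add_inner_gradient_add_sq hlip x ((b / L) • d)
    rwa [real_inner_smul_right, norm_smul, mul_pow, Real.norm_eq_abs, sq_abs] at this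
  have hf₂ : f (x - (a / L) • d)
      ≤ f x - a / L * ⟪gradient f x, d⟫ + L / 2 * ((a / L) ^ 2 * ‖d‖ ^ 2) := by
    have := hdiff.le_add_inner_gradient_add_sq hlip x (-((a / L) • d))
    rwa [← sub_eq_add_neg, inner_neg_right, real_inner_smul_right, norm_neg, norm_smul,
      mul_pow, Real.norm_eq_abs, sq_abs, ← sub_eq_add_neg] at this
  have hd : ⟪y₁, d⟫ - ⟪y₂, d⟫ = ‖d‖ ^ 2 := by
    rw [← inner_sub_left, real_inner_self_eq_norm_sq]
  have hgap : a * (b / L * ⟪y₁, d⟫ - (b / L * ⟪gradient f x, d⟫ + L / 2 * ((b / L) ^ 2 * ‖d‖ ^ 2)))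
      + b * (-(a / L) * ⟪y₂, d⟫
        - (-(a / L) * ⟪gradient f x, d⟫ + L / 2 * ((a / L) ^ 2 * ‖d‖ ^ 2)))
      = a * b * ((L : ℝ)⁻¹ / 2 * ‖d‖ ^ 2) := by
    obtain rfl : b = 1 - a := by linarith
    rw [← hd]
    field_simp
    ring
  simp only [inner_add_left, real_inner_smul_left, smul_eq_mul]
  linear_combination a * h₁ + b * h₂ + a * hf₁ + b * hf₂ - hgap + f x * hab

end InnerProductSpace

theorem dual_function_strictly_concave_general
    {n m : ℕ} (f : EuclideanSpace ℝ (Fin n) → ℝ)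
    (hdiff : Differentiable ℝ f)
    (L : NNReal) (hL : 0 < L) (hlip : LipschitzWith L (gradient f))
    (A : Matrix (Fin m) (Fin n) ℝ) (hA : A.rank = m) (b : EuclideanSpace ℝ (Fin m))
    (hbdd : ∀ ν : EuclideanSpace ℝ (Fin m),
      BddAbove (Set.range fun x : EuclideanSpace ℝ (Fin n) =>
        ⟪-(Matrix.toEuclideanLin Aᵀ ν), x⟫ - f x)) :
    StrictConcaveOn ℝ Set.univ (fun ν : EuclideanSpace ℝ (Fin m) =>
      -⟪ν, b⟫ - sSup (Set.range fun x : EuclideanSpace ℝ (Fin n) =>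
        ⟪-(Matrix.toEuclideanLin Aᵀ ν), x⟫ - f x)) := by
  set T := -Matrix.toEuclideanLin Aᵀ
  have hT : Function.Injective T := neg_injective.comp <|
    injective_toEuclideanLin_of_rank_eq (by rw [rank_transpose, hA, Fintype.card_fin])
  have hconj : StrictConvexOn ℝ (Set.range T) (convexConjugate f) :=
    (strongConvexOn_convexConjugate hdiff hL hlip (LinearMap.range T).convex
      (Set.forall_mem_range.2 hbdd)).strictConvexOn (inv_pos.2 hL)
  have hdual := hconj.comp_linearMap hT
  rw [Set.preimage_range] at hdual
  exact ((-(innerₗ _).flip b).concaveOn convex_univ).sub_strictConvexOn hdual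

/-- If `f` is convex and differentiable with `L`-Lipschitz gradient and `A` has full row
rank, then the dual function `g(ν) = −⟪ν, b⟫ − f*(−Aᵀν)` is strictly concave. -/
theorem dual_function_strictly_concave
    {n m : ℕ} (f : EuclideanSpace ℝ (Fin n) → ℝ)
    (hconv : ConvexOn ℝ Set.univ f) (hdiff : Differentiable ℝ f)
    (L : NNReal) (hL : 0 < L) (hlip : LipschitzWith L (gradient f))
    (A : Matrix (Fin m) (Fin n) ℝ) (hA : A.rank = m) (b : EuclideanSpace ℝ (Fin m))
    (hbdd : ∀ ν : EuclideanSpace ℝ (Fin m),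
      BddAbove (Set.range fun x : EuclideanSpace ℝ (Fin n) =>
        ⟪-(Matrix.toEuclideanLin Aᵀ ν), x⟫ - f x)) :
    StrictConcaveOn ℝ Set.univ (fun ν : EuclideanSpace ℝ (Fin m) =>
      -⟪ν, b⟫ - sSup (Set.range fun x : EuclideanSpace ℝ (Fin n) =>
        ⟪-(Matrix.toEuclideanLin Aᵀ ν), x⟫ - f x)) :=
  dual_function_strictly_concave_general f hdiff L hL hlip A hA b hbdd
end

section
/- Let f : ℝⁿ → ℝ be convex, differentiable, with L-Lipschitz gradient, A a real m×n matrix of rank m, and b ∈ ℝᵐ. Suppose f*(−Aᵀν) := sup_x (⟪−Aᵀν, x⟫ − f(x)) is finite for all ν, set g(ν) = −⟪ν, b⟫ − f*(−Aᵀν) and h = −g, and assume h is differentiable, attains its minimum at ν* (the maximizer of g), and satisfies the Polyak–Łojasiewicz inequality ½‖∇h(ν)‖² ≥ μ (h(ν) − h(ν*)) for all ν with some μ > 0. Fix c₁, c₂ > 0, p₁ > 2, 1 < p₂ < 2, α₁ = 2 − (p₁−2)/(p₁−1), α₂ = 2 − (p₂−2)/(p₂−1). Then every trajectory of ν̇ =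 −c₁∇h(ν)/‖∇h(ν)‖^{(p₁−2)/(p₁−1)} − c₂∇h(ν)/‖∇h(ν)‖^{(p₂−2)/(p₂−1)} (right-hand side 0 when ∇h = 0) satisfies g(ν(t)) = g(ν*) for all t ≥ T_ν := 4/(c₁(2μ)^{α₁/2}(2−α₁)) + 4/(c₂(2μ)^{α₂/2}(α₂−2)), for every initial condition ν(0). -/
/-!
Put `V(t) = h(ν(t)) - h(ν*) ≥ 0`. By the chain rule and the Polyak–Łojasiewicz inequality
`2μV ≤ ‖∇h‖²`, as long as `V > 0`,
`V' = -(c₁‖∇h‖^α₁ + c₂‖∇h‖^α₂) ≤ -(k₁ V^(α₁/2) + k₂ V^(α₂/2))` with `kᵢ = cᵢ(2μ)^(αᵢ/2)`.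
As `α₂/2 > 1`, `V^(1 - α₂/2)` grows at rate at least `(α₂/2 - 1)k₂`, so from any initial value
`V < 1` after time `T₂ = 4/(k₂(α₂ - 2))`. As `α₁/2 < 1`, `V^(1 - α₁/2)` then falls from at most
`1` at rate at least `(1 - α₁/2)k₁`, so `V` vanishes within a further time `T₁ = 4/(k₁(2 - α₁))`.
-/

open scoped RealInnerProductSpace Classical
open Matrix Set

section Comparison

variable {f f' : ℝ → ℝ} {C s e : ℝ}

theorem image_sub_le_mul_sub_of_hasDerivAt_le (hse : s ≤ e)
    (hf : ∀ u ∈ Icc s e, HasDerivAt f (f' u) u) (hf' : ∀ u ∈ Icc s e, f' u ≤ C) :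
    f e - f s ≤ C * (e - s) := by
  have hint : ∀ u ∈ interior (Icc s e), u ∈ Icc s e := fun u hu =>
    Ioo_subset_Icc_self (by rwa [interior_Icc] at hu)
  refine (convex_Icc s e).image_sub_le_mul_sub_of_deriv_le
    (fun u hu => (hf u hu).continuousAt.continuousWithinAt)
    (fun u hu => (hf u (hint u hu)).differentiableAt.differentiableWithinAt)
    (fun u hu => ?_) s (left_mem_Icc.2 hse) e (right_mem_Icc.2 hse) hse
  rw [(hf u (hint u hu)).deriv]
  exact hf' u (hint u hu)

theorem mul_sub_le_image_sub_of_le_hasDerivAt (hse : s ≤ e)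
    (hf : ∀ u ∈ Icc s e, HasDerivAt f (f' u) u) (hf' : ∀ u ∈ Icc s e, C ≤ f' u) :
    C * (e - s) ≤ f e - f s := by
  have := image_sub_le_mul_sub_of_hasDerivAt_le (f := fun u => -f u) (C := -C) hse
    (fun u hu => (hf u hu).neg) (fun u hu => neg_le_neg (hf' u hu))
  linarith

end Comparison

section PowerLyapunov

variable {V V' : ℝ → ℝ} {k p s e : ℝ}

theorem rpow_neg_mul_le_of_le_neg_mul_rpow {v d : ℝ} (hv : 0 < v) (hd : d ≤ -(k * v ^ p)) :
    v ^ (-p) * d ≤ -k :=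
  calc v ^ (-p) * d ≤ v ^ (-p) * -(k * v ^ p) :=
        mul_le_mul_of_nonneg_left hd (Real.rpow_nonneg hv.le _)
    _ = -k * (v ^ (-p) * v ^ p) := by ring
    _ = -k := by rw [← Real.rpow_add hv, neg_add_cancel, Real.rpow_zero, mul_one]

theorem HasDerivAt.rpow_one_sub {t d : ℝ} (hV : HasDerivAt V d t) (hpos : 0 < V t) :
    HasDerivAt (fun r => V r ^ (1 - p)) ((1 - p) * (V t ^ (-p) * d)) t := by
  convert hV.rpow_const (p := 1 - p) (Or.inl hpos.ne') using 1
  rw [show 1 - p - 1 = -p by ring]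
  ring

theorem rpow_one_sub_le_of_deriv_le_neg_rpow (hp : p < 1) (hse : s ≤ e)
    (hpos : ∀ u ∈ Icc s e, 0 < V u) (hV : ∀ u ∈ Icc s e, HasDerivAt V (V' u) u)
    (hV' : ∀ u ∈ Icc s e, V' u ≤ -(k * V u ^ p)) :
    V e ^ (1 - p) ≤ V s ^ (1 - p) - (1 - p) * k * (e - s) := by
  have := image_sub_le_mul_sub_of_hasDerivAt_le hse
    (fun u hu => (hV u hu).rpow_one_sub (p := p) (hpos u hu)) fun u hu =>
      (mul_le_mul_of_nonneg_left (rpow_neg_mul_le_of_le_neg_mul_rpow (hpos u hu) (hV' u hu))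
        (sub_nonneg.2 hp.le)).trans_eq (mul_neg _ _)
  linarith

theorem rpow_one_sub_ge_of_deriv_le_neg_rpow (hp : 1 < p) (hse : s ≤ e)
    (hpos : ∀ u ∈ Icc s e, 0 < V u) (hV : ∀ u ∈ Icc s e, HasDerivAt V (V' u) u)
    (hV' : ∀ u ∈ Icc s e, V' u ≤ -(k * V u ^ p)) :
    V s ^ (1 - p) + (p - 1) * k * (e - s) ≤ V e ^ (1 - p) := by
  have := mul_sub_le_image_sub_of_le_hasDerivAt (C := (p - 1) * k) hse
    (fun u hu => (hV u hu).rpow_one_sub (p := p) (hpos u hu)) fun u hu =>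
      (mul_le_mul_of_nonpos_left (rpow_neg_mul_le_of_le_neg_mul_rpow (hpos u hu) (hV' u hu))
        (sub_nonpos.2 hp.le)).trans_eq' (by ring)
  linarith

end PowerLyapunov

section FixedTime

variable {V V' : ℝ → ℝ} {k₁ k₂ a b : ℝ}

theorem deriv_nonpos_of_le_neg_rpow_add_rpow (hk₁ : 0 < k₁) (hk₂ : 0 < k₂)
    (hV₀ : ∀ t, 0 ≤ V t) (hV : ∀ t, 0 ≤ t → HasDerivAt V (V' t) t)
    (hV' : ∀ t, 0 ≤ t → 0 < V t → V' t ≤ -(k₁ * V t ^ a + k₂ * V t ^ b)) {t : ℝ} (ht : 0 ≤ t) :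
    V' t ≤ 0 := by
  rcases (hV₀ t).eq_or_lt with hzero | hpos
  · -- `V ≥ 0 = V t`, so `t` is a minimum of `V`
    exact (IsLocalMin.hasDerivAt_eq_zero (Filter.Eventually.of_forall fun x => hzero ▸ hV₀ x)
      (hV t ht)).le
  · refine (hV' t ht hpos).trans (neg_nonpos.2 ?_)
    positivity

theorem eq_zero_of_deriv_le_neg_rpow_add_rpow (hk₁ : 0 < k₁) (hk₂ : 0 < k₂) (ha : a < 1)
    (hb : 1 < b) (hV₀ : ∀ t, 0 ≤ V t) (hV : ∀ t, 0 ≤ t → HasDerivAt V (V' t) t)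
    (hV' : ∀ t, 0 ≤ t → 0 < V t → V' t ≤ -(k₁ * V t ^ a + k₂ * V t ^ b)) {t : ℝ}
    (ht : 2 / (k₁ * (1 - a)) + 2 / (k₂ * (b - 1)) ≤ t) : V t = 0 := by
  have ha' : 0 < 1 - a := sub_pos.2 ha
  have hb' : 0 < b - 1 := sub_pos.2 hb
  have hT₁ : (1 - a) * k₁ * (2 / (k₁ * (1 - a))) = 2 := by field_simp
  have hT₂ : (b - 1) * k₂ * (2 / (k₂ * (b - 1))) = 2 := by field_simp
  have hT₂t : 0 ≤ 2 / (k₂ * (b - 1)) ∧ 2 / (k₂ * (b - 1)) ≤ t := by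
    have : 0 < 2 / (k₁ * (1 - a)) := by positivity
    have : 0 < 2 / (k₂ * (b - 1)) := by positivity
    constructor <;> linarith
  set T₁ := 2 / (k₁ * (1 - a))
  set T₂ := 2 / (k₂ * (b - 1))
  have hanti : ∀ s, 0 ≤ s → s ≤ t → V t ≤ V s := fun s hs hst => by
    have := image_sub_le_mul_sub_of_hasDerivAt_le hst (fun u hu => hV u (hs.trans hu.1))
      fun u hu => deriv_nonpos_of_le_neg_rpow_add_rpow hk₁ hk₂ hV₀ hV hV' (hs.trans hu.1)
    linarith
  by_contra hne
  have hpos : ∀ u ∈ Icc 0 t, 0 < V u := fun u hu =>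
    ((hV₀ t).lt_of_ne' hne).trans_le (hanti u hu.1 hu.2)
  have hV'b : ∀ u ∈ Icc 0 T₂, V' u ≤ -(k₂ * V u ^ b) := fun u hu => by
    have := hV' u hu.1 (hpos u ⟨hu.1, hu.2.trans hT₂t.2⟩)
    have : 0 ≤ k₁ * V u ^ a := mul_nonneg hk₁.le (Real.rpow_nonneg (hV₀ u) a)
    linarith
  have hV'a : ∀ u ∈ Icc T₂ t, V' u ≤ -(k₁ * V u ^ a) := fun u hu => by
    have := hV' u (hT₂t.1.trans hu.1) (hpos u ⟨hT₂t.1.trans hu.1, hu.2⟩)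
    have : 0 ≤ k₂ * V u ^ b := mul_nonneg hk₂.le (Real.rpow_nonneg (hV₀ u) b)
    linarith
  have hsmall : V T₂ < 1 := by
    by_contra! hbig
    have := rpow_one_sub_ge_of_deriv_le_neg_rpow hb hT₂t.1
      (fun u hu => hpos u ⟨hu.1, hu.2.trans hT₂t.2⟩) (fun u hu => hV u hu.1) hV'b
    have : 0 < V 0 ^ (1 - b) := Real.rpow_pos_of_pos (hpos 0 ⟨le_rfl, hT₂t.1.trans hT₂t.2⟩) _
    have : V T₂ ^ (1 - b) ≤ 1 := Real.rpow_le_one_of_one_le_of_nonpos hbig (by linarith)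
    linarith
  have := rpow_one_sub_le_of_deriv_le_neg_rpow ha hT₂t.2
    (fun u hu => hpos u ⟨hT₂t.1.trans hu.1, hu.2⟩) (fun u hu => hV u (hT₂t.1.trans hu.1)) hV'a
  have : V T₂ ^ (1 - a) ≤ 1 := Real.rpow_le_one (hV₀ _) hsmall.le (by linarith)
  have : 0 < V t ^ (1 - a) := Real.rpow_pos_of_pos (hpos t ⟨hT₂t.1.trans hT₂t.2, le_rfl⟩) _
  have : (1 - a) * k₁ * T₁ ≤ (1 - a) * k₁ * (t - T₂) :=
    mul_le_mul_of_nonneg_left (by linarith) (mul_nonneg ha'.le hk₁.le)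
  linarith

end FixedTime

section RescaledGradientFlow

variable {E : Type*} [NormedAddCommGroup E] [InnerProductSpace ℝ E]

theorem HasGradientAt.hasDerivAt_comp_s8 [CompleteSpace E] {h : E → ℝ} {h' ν' : E} {ν : ℝ → E}
    {t : ℝ} (hh : HasGradientAt h h' (ν t)) (hν : HasDerivAt ν ν' t) :
    HasDerivAt (fun s => h (ν s)) ⟪h', ν'⟫ t :=
  hh.hasFDerivAt.comp_hasDerivAt t hν

/-- The flow of the theorem is `ν̇ = fixedTimeField c₁ c₂ q₁ q₂ (∇h ν)`, `qᵢ = (pᵢ-2)/(pᵢ-1)`. -/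
noncomputable def fixedTimeField [DecidableEq E] (c₁ c₂ q₁ q₂ : ℝ) (v : E) : E :=
  if v = 0 then 0 else -((c₁ / ‖v‖ ^ q₁) • v) - (c₂ / ‖v‖ ^ q₂) • v

theorem inner_fixedTimeField_self [DecidableEq E] {c₁ c₂ q₁ q₂ : ℝ} {v : E} (hv : v ≠ 0) :
    ⟪v, fixedTimeField c₁ c₂ q₁ q₂ v⟫ = -(c₁ * ‖v‖ ^ (2 - q₁) + c₂ * ‖v‖ ^ (2 - q₂)) := by
  have hnorm : 0 < ‖v‖ := norm_pos_iff.2 hv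
  have hdiv : ∀ c q : ℝ, c / ‖v‖ ^ q * ‖v‖ ^ 2 = c * ‖v‖ ^ (2 - q) := fun c q => by
    rw [Real.rpow_sub hnorm, Real.rpow_two]
    ring
  simp only [fixedTimeField, if_neg hv, inner_sub_right, inner_neg_right, real_inner_smul_right,
    real_inner_self_eq_norm_sq, hdiv]
  ring

theorem rpow_half_mul_le_rpow_of_le_sq {x y α : ℝ} (hx : 0 ≤ x) (hy : 0 ≤ y) (hxy : x ≤ y ^ 2)
    (hα : 0 ≤ α) : x ^ (α / 2) ≤ y ^ α :=
  calc x ^ (α / 2) ≤ (y ^ 2) ^ (α / 2) := Real.rpow_le_rpow hx hxy (by linarith)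
    _ = y ^ α := by rw [← Real.rpow_natCast_mul hy, Nat.cast_ofNat, mul_div_cancel₀ α two_ne_zero]

theorem inner_fixedTimeField_le_of_two_mul_le_sq [DecidableEq E] {c₁ c₂ α₁ α₂ μ Δ : ℝ} {v : E}
    (hc₁ : 0 ≤ c₁) (hc₂ : 0 ≤ c₂) (hα₁ : 0 ≤ α₁) (hα₂ : 0 ≤ α₂) (hμ : 0 < μ) (hΔ : 0 < Δ)
    (hv : 2 * μ * Δ ≤ ‖v‖ ^ 2) :
    ⟪v, fixedTimeField c₁ c₂ (2 - α₁) (2 - α₂) v⟫ ≤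
      -(c₁ * (2 * μ) ^ (α₁ / 2) * Δ ^ (α₁ / 2) + c₂ * (2 * μ) ^ (α₂ / 2) * Δ ^ (α₂ / 2)) := by
  have hv₀ : v ≠ 0 := by
    rintro rfl
    have : 0 < 2 * μ * Δ := by positivity
    rw [norm_zero, zero_pow two_ne_zero] at hv
    linarith
  have hx : 0 ≤ 2 * μ * Δ := by positivity
  have key : ∀ α : ℝ, 0 ≤ α → (2 * μ) ^ (α / 2) * Δ ^ (α / 2) ≤ ‖v‖ ^ α := fun α hα => by
    rw [← Real.mul_rpow (by positivity) hΔ.le]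
    exact rpow_half_mul_le_rpow_of_le_sq hx (norm_nonneg v) hv hα
  rw [inner_fixedTimeField_self hv₀, sub_sub_cancel, sub_sub_cancel, mul_assoc, mul_assoc]
  have := mul_le_mul_of_nonneg_left (key α₁ hα₁) hc₁
  have := mul_le_mul_of_nonneg_left (key α₂ hα₂) hc₂
  linarith

end RescaledGradientFlow

theorem fixed_time_dual_ascent_general
    {m : ℕ}
    (g h : EuclideanSpace ℝ (Fin m) → ℝ)
    (hh : h = -g) (hhdiff : Differentiable ℝ h)
    (νstar : EuclideanSpace ℝ (Fin m)) (hνstar : ∀ ν, h νstar ≤ h ν)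
    (μ : ℝ) (hμ : 0 < μ)
    (hPL : ∀ ν : EuclideanSpace ℝ (Fin m),
      μ * (h ν - h νstar) ≤ (1 / 2) * ‖gradient h ν‖ ^ 2)
    (c₁ c₂ p₁ p₂ : ℝ) (hc₁ : 0 < c₁) (hc₂ : 0 < c₂)
    (hp₁ : 2 < p₁) (hp₂ : 1 < p₂) (hp₂' : p₂ < 2)
    (α₁ α₂ : ℝ) (hα₁ : α₁ = 2 - (p₁ - 2) / (p₁ - 1)) (hα₂ : α₂ = 2 - (p₂ - 2) / (p₂ - 1))
    (ν : ℝ → EuclideanSpace ℝ (Fin m))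
    (hν : ∀ t : ℝ, 0 ≤ t → HasDerivAt ν
      (if gradient h (ν t) = 0 then 0
       else -((c₁ / ‖gradient h (ν t)‖ ^ ((p₁ - 2) / (p₁ - 1))) • gradient h (ν t))
            - (c₂ / ‖gradient h (ν t)‖ ^ ((p₂ - 2) / (p₂ - 1))) • gradient h (ν t)) t) :
    ∀ t : ℝ,
      4 / (c₁ * (2 * μ) ^ (α₁ / 2) * (2 - α₁)) + 4 / (c₂ * (2 * μ) ^ (α₂ / 2) * (α₂ - 2)) ≤ t →
      g (ν t) = g νstar := by
  intro t ht
  have hq₁ : (p₁ - 2) / (p₁ - 1) = 2 - α₁ := by rw [hα₁]; ring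
  have hq₂ : (p₂ - 2) / (p₂ - 1) = 2 - α₂ := by rw [hα₂]; ring
  have hα₁' : 0 < 2 - α₁ ∧ 2 - α₁ < 1 := by
    rw [← hq₁]
    exact ⟨div_pos (by linarith) (by linarith), (div_lt_one (by linarith)).2 (by linarith)⟩
  have hα₂' : 2 - α₂ < 0 := hq₂ ▸ div_neg_of_neg_of_pos (by linarith) (by linarith)
  have hk₁ : 0 < c₁ * (2 * μ) ^ (α₁ / 2) := by positivity
  have hk₂ : 0 < c₂ * (2 * μ) ^ (α₂ / 2) := by positivity
  have hV : ∀ s, 0 ≤ s → HasDerivAt (fun s => h (ν s) - h νstar)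
      ⟪gradient h (ν s), fixedTimeField c₁ c₂ (2 - α₁) (2 - α₂) (gradient h (ν s))⟫ s :=
    fun s hs => by
      rw [← hq₁, ← hq₂]
      exact ((hhdiff _).hasGradientAt.hasDerivAt_comp_s8 (hν s hs)).sub_const _
  have hdecay : h (ν t) - h νstar = 0 :=
    eq_zero_of_deriv_le_neg_rpow_add_rpow hk₁ hk₂ (a := α₁ / 2) (b := α₂ / 2)
      (by linarith) (by linarith) (fun s => sub_nonneg.2 (hνstar (ν s))) hV
      (fun s _ hs => (inner_fixedTimeField_le_of_two_mul_le_sq hc₁.le hc₂.le (by linarith)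
        (by linarith) hμ hs (by linarith [hPL (ν s)])).trans_eq (by ring))
      (by convert ht using 2 <;> field_simp <;> ring)
  simp only [hh, Pi.neg_apply] at hdecay ⊢
  linarith

/-- Fixed-time convergence of the rescaled gradient flow on the (negated) dual function
`h = −g`, `g(ν) = −⟪ν, b⟫ − f*(−Aᵀν)`: every trajectory attains the dual optimal value
`g(ν*)` within the fixed time `T_ν = 4/(c₁(2μ)^{α₁/2}(2−α₁)) + 4/(c₂(2μ)^{α₂/2}(α₂−2))`. -/
theorem fixed_time_dual_ascent
    {n m : ℕ} (f : EuclideanSpace ℝ (Fin n) → ℝ)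
    (hconv : ConvexOn ℝ Set.univ f) (hdiff : Differentiable ℝ f)
    (L : NNReal) (hL : 0 < L) (hlip : LipschitzWith L (gradient f))
    (A : Matrix (Fin m) (Fin n) ℝ) (hA : A.rank = m) (b : EuclideanSpace ℝ (Fin m))
    (hbdd : ∀ ν : EuclideanSpace ℝ (Fin m),
      BddAbove (Set.range fun x : EuclideanSpace ℝ (Fin n) =>
        ⟪-(Matrix.toEuclideanLin Aᵀ ν), x⟫ - f x))
    (g h : EuclideanSpace ℝ (Fin m) → ℝ)
    (hg : g = fun ν => -⟪ν, b⟫ - sSup (Set.range fun x : EuclideanSpace ℝ (Fin n) =>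
        ⟪-(Matrix.toEuclideanLin Aᵀ ν), x⟫ - f x))
    (hh : h = -g) (hhdiff : Differentiable ℝ h)
    (νstar : EuclideanSpace ℝ (Fin m)) (hνstar : ∀ ν, h νstar ≤ h ν)
    (μ : ℝ) (hμ : 0 < μ)
    (hPL : ∀ ν : EuclideanSpace ℝ (Fin m),
      μ * (h ν - h νstar) ≤ (1 / 2) * ‖gradient h ν‖ ^ 2)
    (c₁ c₂ p₁ p₂ : ℝ) (hc₁ : 0 < c₁) (hc₂ : 0 < c₂)
    (hp₁ : 2 < p₁) (hp₂ : 1 < p₂) (hp₂' : p₂ < 2)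
    (α₁ α₂ : ℝ) (hα₁ : α₁ = 2 - (p₁ - 2) / (p₁ - 1)) (hα₂ : α₂ = 2 - (p₂ - 2) / (p₂ - 1))
    (ν : ℝ → EuclideanSpace ℝ (Fin m))
    (hν : ∀ t : ℝ, 0 ≤ t → HasDerivAt ν
      (if gradient h (ν t) = 0 then 0
       else -((c₁ / ‖gradient h (ν t)‖ ^ ((p₁ - 2) / (p₁ - 1))) • gradient h (ν t))
            - (c₂ / ‖gradient h (ν t)‖ ^ ((p₂ - 2) / (p₂ - 1))) • gradient h (ν t)) t) :
    ∀ t : ℝ,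
      4 / (c₁ * (2 * μ) ^ (α₁ / 2) * (2 - α₁)) + 4 / (c₂ * (2 * μ) ^ (α₂ / 2) * (α₂ - 2)) ≤ t →
      g (ν t) = g νstar :=
  fixed_time_dual_ascent_general g h hh hhdiff νstar hνstar μ hμ hPL c₁ c₂ p₁ p₂ hc₁ hc₂ hp₁ hp₂
    hp₂' α₁ α₂ hα₁ hα₂ ν hν
end

section
/- Let f satisfy the Polyak–Łojasiewicz inequality with constant μ_f > 0 and have unique minimizer x* with f* = f(x*). Suppose x : ℝ → ℝⁿ is differentiable at t with x'(t) = −∇f(x(t))/‖∇f(x(t))‖^{1/2} and ∇f(x(t)) ≠ 0. Then the function V ∘ x, where V(y) = ½(f(y) − f*)², is differentiable at t and satisfies (V ∘ x)'(t) ≤ −(2μ_f)^{3/4}·(V(x(t)))^{7/8}. -/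
/-!
Along the flow, `d/dt (f - f*) = -‖∇f‖^{3/2}`, and the PL inequality gives
`‖∇f‖^{3/2} ≥ (2μ (f - f*))^{3/4}`. Hence `(V ∘ x)' = -(f - f*) ‖∇f‖^{3/2} ≤ -(2μ)^{3/4} (f - f*)^{7/4}`,
and `(f - f*)^{7/4} = (2V)^{7/8} ≥ V^{7/8}`.
-/

open scoped RealInnerProductSpace

section Flow

variable {E : Type*} [NormedAddCommGroup E] [InnerProductSpace ℝ E]

theorem hasDerivAt_half_sq_sub_comp [CompleteSpace E] {f : E → ℝ} {g v : E} {x : ℝ → E} {t c : ℝ}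
    (hf : HasGradientAt f g (x t)) (hx : HasDerivAt x v t) :
    HasDerivAt (fun s => 1 / 2 * (f (x s) - c) ^ 2) ((f (x t) - c) * ⟪g, v⟫) t := by
  have hfx : HasDerivAt (fun s => f (x s)) ⟪g, v⟫ t := hf.hasFDerivAt.comp_hasDerivAt t hx
  refine (((hfx.sub_const c).pow 2).const_mul (1 / 2 : ℝ)).congr_deriv ?_
  push_cast
  ring

/-- Valid also at `g = 0`, where both sides vanish since `0⁻¹ = 0`. -/
theorem inner_neg_inv_sqrt_norm_smul_self (g : E) :
    ⟪g, -(‖g‖ ^ (1 / 2 : ℝ))⁻¹ • g⟫ = -‖g‖ ^ (3 / 2 : ℝ) := by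
  have hg := norm_nonneg g
  rw [real_inner_smul_right, real_inner_self_eq_norm_sq, neg_mul,
    ← Real.rpow_neg hg, ← Real.rpow_two, ← Real.rpow_add' hg (by norm_num)]
  norm_num

end Flow

theorem rpow_three_quarters_le_of_le_sq {y G : ℝ} (hy : 0 ≤ y) (hG : 0 ≤ G) (h : y ≤ G ^ 2) :
    y ^ (3 / 4 : ℝ) ≤ G ^ (3 / 2 : ℝ) := by
  calc y ^ (3 / 4 : ℝ) ≤ (G ^ 2) ^ (3 / 4 : ℝ) := Real.rpow_le_rpow hy h (by norm_num)
    _ = G ^ (3 / 2 : ℝ) := by rw [← Real.rpow_two, ← Real.rpow_mul hG]; norm_num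

theorem half_sq_rpow_seven_eighths_le {a : ℝ} (ha : 0 ≤ a) :
    (1 / 2 * a ^ 2) ^ (7 / 8 : ℝ) ≤ a ^ (7 / 4 : ℝ) := by
  calc (1 / 2 * a ^ 2) ^ (7 / 8 : ℝ) ≤ (a ^ 2) ^ (7 / 8 : ℝ) :=
        Real.rpow_le_rpow (by positivity) (by nlinarith [sq_nonneg a]) (by norm_num)
    _ = a ^ (7 / 4 : ℝ) := by rw [← Real.rpow_two, ← Real.rpow_mul ha]; norm_num

theorem rpow_mul_half_sq_rpow_le_of_PL {μ a G : ℝ} (hμ : 0 ≤ μ) (ha : 0 ≤ a) (hG : 0 ≤ G)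
    (hPL : 2 * μ * a ≤ G ^ 2) :
    (2 * μ) ^ (3 / 4 : ℝ) * (1 / 2 * a ^ 2) ^ (7 / 8 : ℝ) ≤ a * G ^ (3 / 2 : ℝ) := by
  have hsplit : a * (2 * μ * a) ^ (3 / 4 : ℝ) = (2 * μ) ^ (3 / 4 : ℝ) * a ^ (7 / 4 : ℝ) := by
    rw [Real.mul_rpow (by positivity) ha, show (7 / 4 : ℝ) = 1 + 3 / 4 by norm_num,
      Real.rpow_add' ha (by norm_num), Real.rpow_one]
    ring
  calc (2 * μ) ^ (3 / 4 : ℝ) * (1 / 2 * a ^ 2) ^ (7 / 8 : ℝ)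
      ≤ (2 * μ) ^ (3 / 4 : ℝ) * a ^ (7 / 4 : ℝ) := by
        gcongr
        exact half_sq_rpow_seven_eighths_le ha
    _ = a * (2 * μ * a) ^ (3 / 4 : ℝ) := hsplit.symm
    _ ≤ a * G ^ (3 / 2 : ℝ) := by
        gcongr
        exact rpow_three_quarters_le_of_le_sq (by positivity) hG hPL

theorem lyapunov_decrease_rescaled_flow_PL_general
    {n : ℕ} (f : EuclideanSpace ℝ (Fin n) → ℝ) (hf : ContDiff ℝ 1 f)
    (μf : ℝ) (hμf : 0 < μf)
    (xstar : EuclideanSpace ℝ (Fin n))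
    (hmin : ∀ y, f xstar ≤ f y)
    (hPL : ∀ y : EuclideanSpace ℝ (Fin n),
      μf * (f y - f xstar) ≤ (1 / 2) * ‖gradient f y‖ ^ 2)
    (x : ℝ → EuclideanSpace ℝ (Fin n)) (t : ℝ)
    (hx : HasDerivAt x
      (-(‖gradient f (x t)‖ ^ ((1 : ℝ) / 2))⁻¹ • gradient f (x t)) t) :
    ∃ d : ℝ, HasDerivAt (fun s => (1 / 2) * (f (x s) - f xstar) ^ 2) d t ∧
      d ≤ -((2 * μf) ^ ((3 : ℝ) / 4) *
        ((1 / 2) * (f (x t) - f xstar) ^ 2) ^ ((7 : ℝ) / 8)) := by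
  have hgrad : HasGradientAt f (gradient f (x t)) (x t) :=
    (hf.differentiable one_ne_zero (x t)).hasGradientAt
  refine ⟨_, hasDerivAt_half_sq_sub_comp hgrad hx, ?_⟩
  rw [inner_neg_inv_sqrt_norm_smul_self, mul_neg, neg_le_neg_iff]
  exact rpow_mul_half_sq_rpow_le_of_PL hμf.le (sub_nonneg.2 (hmin _)) (norm_nonneg _)
    (by linarith [hPL (x t)])

/-- Lyapunov decrease for the rescaled gradient flow under the PL inequality: along
`ẋ = −∇f(x)/‖∇f(x)‖^{1/2}` (at a point where `∇f(x(t)) ≠ 0`), the function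
`V(y) = ½(f(y) − f*)²` satisfies `(V∘x)'(t) ≤ −(2μ_f)^{3/4}·V(x(t))^{7/8}`. -/
theorem lyapunov_decrease_rescaled_flow_PL
    {n : ℕ} (f : EuclideanSpace ℝ (Fin n) → ℝ) (hf : ContDiff ℝ 1 f)
    (μf : ℝ) (hμf : 0 < μf)
    (xstar : EuclideanSpace ℝ (Fin n))
    (hmin : ∀ y, f xstar ≤ f y)
    (huniq : ∀ y, f y = f xstar → y = xstar)
    (hPL : ∀ y : EuclideanSpace ℝ (Fin n),
      μf * (f y - f xstar) ≤ (1 / 2) * ‖gradient f y‖ ^ 2)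
    (x : ℝ → EuclideanSpace ℝ (Fin n)) (t : ℝ)
    (hx : HasDerivAt x
      (-(‖gradient f (x t)‖ ^ ((1 : ℝ) / 2))⁻¹ • gradient f (x t)) t)
    (hne : gradient f (x t) ≠ 0) :
    ∃ d : ℝ, HasDerivAt (fun s => (1 / 2) * (f (x s) - f xstar) ^ 2) d t ∧
      d ≤ -((2 * μf) ^ ((3 : ℝ) / 4) *
        ((1 / 2) * (f (x t) - f xstar) ^ 2) ^ ((7 : ℝ) / 8)) :=
  lyapunov_decrease_rescaled_flow_PL_general f hf μf hμf xstar hmin hPL x t hx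
end

section
/- Fix c₁, c₂ > 0, p₁ > 2, 1 < p₂ < 2, α₁ = 2 − (p₁−2)/(p₁−1), α₂ = 2 − (p₂−2)/(p₂−1). Let f be twice continuously differentiable with ∇²f(x(t)) invertible. Suppose x : ℝ → ℝⁿ is differentiable at t with x'(t) = −(∇²f(x(t)))⁻¹ (c₁∇f(x(t))/‖∇f(x(t))‖^{(p₁−2)/(p₁−1)} + c₂∇f(x(t))/‖∇f(x(t))‖^{(p₂−2)/(p₂−1)}) and ∇f(x(t)) ≠ 0. Then the function V ∘ x, where V(y) = ½‖∇f(y)‖², is differentiable at t and satisfies (V ∘ x)'(t) = −c₁‖∇f(x(t))‖^{α₁} − c₂‖∇f(x(t))‖^{α₂}. -/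
open scoped RealInnerProductSpace

/-! The chain rule gives `(V ∘ x)' = ⟪∇f(x), ∇²f(x) ẋ⟫`, and the inverse Hessian in the flow
cancels the Hessian, leaving `-⟪∇f, c₁‖∇f‖^{-e₁} ∇f + c₂‖∇f‖^{-e₂} ∇f⟫` with
`eᵢ = (pᵢ - 2)/(pᵢ - 1)`; since `∇f(x(t)) ≠ 0`,
`‖∇f‖^{-eᵢ} ‖∇f‖² = ‖∇f‖^{2 - eᵢ} = ‖∇f‖^{αᵢ}`. -/

theorem ContDiff.contDiff_gradient {F : Type*} [NormedAddCommGroup F] [InnerProductSpace ℝ F]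
    [CompleteSpace F] {f : F → ℝ} {n : WithTop ℕ∞} (hf : ContDiff ℝ (n + 1) f) :
    ContDiff ℝ n (gradient f) := by
  have hdual : gradient f = (InnerProductSpace.toDual ℝ F).symm ∘ fderiv ℝ f :=
    funext fun _ => (InnerProductSpace.toDual ℝ F).eq_symm_apply.mpr toDual_gradient
  rw [hdual]
  exact (InnerProductSpace.toDual ℝ F).symm.contDiff.comp (hf.fderiv_right le_rfl)

theorem HasFDerivAt.comp_hasDerivAt_ring_inverse {E : Type*} [NormedAddCommGroup E]
    [NormedSpace ℝ E] {g : E → E} {L : E →L[ℝ] E} {x : ℝ → E} {t : ℝ} {v : E}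
    (hg : HasFDerivAt g L (x t)) (hL : IsUnit L) (hx : HasDerivAt x (Ring.inverse L v) t) :
    HasDerivAt (fun s => g (x s)) v t := by
  have hcomp := hg.comp_hasDerivAt t hx
  rwa [← mul_apply_eq_comp, Ring.mul_inverse_cancel L hL, one_apply_eq_self] at hcomp

theorem HasDerivAt.half_norm_sq {F : Type*} [NormedAddCommGroup F] [InnerProductSpace ℝ F]
    {y : ℝ → F} {w : F} {t : ℝ} (hy : HasDerivAt y w t) :
    HasDerivAt (fun s => 1 / 2 * ‖y s‖ ^ 2) ⟪y t, w⟫ t := by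
  have h := hy.norm_sq.const_mul (1 / 2)
  rwa [← mul_assoc, one_div_mul_cancel two_ne_zero, one_mul] at h

theorem Real.div_rpow_mul_sq (c : ℝ) {r : ℝ} (hr : 0 < r) (e : ℝ) :
    c / r ^ e * r ^ 2 = c * r ^ (2 - e) := by
  rw [Real.rpow_sub hr, Real.rpow_two]
  ring

theorem lyapunov_derivative_newton_flow_general
    {n : ℕ} (c₁ c₂ p₁ p₂ : ℝ)
    (α₁ α₂ : ℝ) (hα₁ : α₁ = 2 - (p₁ - 2) / (p₁ - 1)) (hα₂ : α₂ = 2 - (p₂ - 2) / (p₂ - 1))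
    (f : EuclideanSpace ℝ (Fin n) → ℝ) (hf : ContDiff ℝ 2 f)
    (x : ℝ → EuclideanSpace ℝ (Fin n)) (t : ℝ)
    (hinv : IsUnit (fderiv ℝ (gradient f) (x t)))
    (hx : HasDerivAt x
      (-(Ring.inverse (fderiv ℝ (gradient f) (x t))
        ((c₁ / ‖gradient f (x t)‖ ^ ((p₁ - 2) / (p₁ - 1))) • gradient f (x t)
          + (c₂ / ‖gradient f (x t)‖ ^ ((p₂ - 2) / (p₂ - 1))) • gradient f (x t)))) t)
    (hne : gradient f (x t) ≠ 0) :
    HasDerivAt (fun s => (1 / 2) * ‖gradient f (x s)‖ ^ 2)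
      (-(c₁ * ‖gradient f (x t)‖ ^ α₁) - c₂ * ‖gradient f (x t)‖ ^ α₂) t := by
  have hgrad : HasFDerivAt (gradient f) (fderiv ℝ (gradient f) (x t)) (x t) :=
    ((hf.contDiff_gradient (n := 1)).differentiable one_ne_zero (x t)).hasFDerivAt
  have hflow := (hgrad.comp_hasDerivAt_ring_inverse hinv (by rwa [map_neg])).half_norm_sq
  convert hflow using 1
  have hpos : 0 < ‖gradient f (x t)‖ := norm_pos_iff.mpr hne
  simp only [inner_neg_right, inner_add_right, real_inner_smul_right,
    real_inner_self_eq_norm_sq, Real.div_rpow_mul_sq _ hpos, hα₁, hα₂]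
  ring

/-- Lyapunov derivative along the modified Newton flow: along
`ẋ = −(∇²f(x))⁻¹(c₁∇f/‖∇f‖^{(p₁−2)/(p₁−1)} + c₂∇f/‖∇f‖^{(p₂−2)/(p₂−1)})` (at a point
where `∇f(x(t)) ≠ 0` and the Hessian is invertible), `V(y) = ½‖∇f(y)‖²` satisfies
`(V∘x)'(t) = −c₁‖∇f(x(t))‖^{α₁} − c₂‖∇f(x(t))‖^{α₂}`. -/
theorem lyapunov_derivative_newton_flow
    {n : ℕ} (c₁ c₂ p₁ p₂ : ℝ) (hc₁ : 0 < c₁) (hc₂ : 0 < c₂)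
    (hp₁ : 2 < p₁) (hp₂ : 1 < p₂) (hp₂' : p₂ < 2)
    (α₁ α₂ : ℝ) (hα₁ : α₁ = 2 - (p₁ - 2) / (p₁ - 1)) (hα₂ : α₂ = 2 - (p₂ - 2) / (p₂ - 1))
    (f : EuclideanSpace ℝ (Fin n) → ℝ) (hf : ContDiff ℝ 2 f)
    (x : ℝ → EuclideanSpace ℝ (Fin n)) (t : ℝ)
    (hinv : IsUnit (fderiv ℝ (gradient f) (x t)))
    (hx : HasDerivAt x
      (-(Ring.inverse (fderiv ℝ (gradient f) (x t))
        ((c₁ / ‖gradient f (x t)‖ ^ ((p₁ - 2) / (p₁ - 1))) • gradient f (x t)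
          + (c₂ / ‖gradient f (x t)‖ ^ ((p₂ - 2) / (p₂ - 1))) • gradient f (x t)))) t)
    (hne : gradient f (x t) ≠ 0) :
    HasDerivAt (fun s => (1 / 2) * ‖gradient f (x s)‖ ^ 2)
      (-(c₁ * ‖gradient f (x t)‖ ^ α₁) - c₂ * ‖gradient f (x t)‖ ^ α₂) t :=
  lyapunov_derivative_newton_flow_general c₁ c₂ p₁ p₂ α₁ α₂ hα₁ hα₂ f hf x t hinv hx hne
end
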